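/- arXiv:1003.2305 — 6 statements merged into one kernel-verified Lean document; each statement's English description precedes it below -/
import Mathlib

section
/- If a : [0,∞) → [0,∞) is C¹ with a(0)=0 and a₀ ≤ t·a'(t)/a(t) ≤ a₁ for all t>0, then for all s,t ≥ 0: min(s^{a₀}, s^{a₁})·a(t) ≤ a(s·t) ≤ max(s^{a₀}, s^{a₁})·a(t). -/
open Real Set

private lemma step_le (A B s t b : ℝ) (hs : 0 < s) (ht : 0 < t)
    (h : A * t ^ (-b) ≤ B * (s * t) ^ (-b)) : s ^ b * A ≤ B := by
  have hP : (0:ℝ) < s ^ b := Real.rpow_pos_of_pos hs b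
  have hQ : (0:ℝ) < t ^ b := Real.rpow_pos_of_pos ht b
  have h2 : A * (t ^ b)⁻¹ ≤ B * ((s ^ b)⁻¹ * (t ^ b)⁻¹) := by
    rw [Real.rpow_neg (mul_pos hs ht).le, Real.mul_rpow hs.le ht.le, mul_inv,
      Real.rpow_neg ht.le] at h
    exact h
  have h3 := mul_le_mul_of_nonneg_right h2 (mul_pos hP hQ).le
  have hL : A * (t ^ b)⁻¹ * (s ^ b * t ^ b) = s ^ b * A := by
    field_simp
  have hR : B * ((s ^ b)⁻¹ * (t ^ b)⁻¹) * (s ^ b * t ^ b) = B := by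
    field_simp
  rw [hL, hR] at h3
  exact h3

private lemma step_ge (A B s t b : ℝ) (hs : 0 < s) (ht : 0 < t)
    (h : B * (s * t) ^ (-b) ≤ A * t ^ (-b)) : B ≤ s ^ b * A := by
  have hP : (0:ℝ) < s ^ b := Real.rpow_pos_of_pos hs b
  have hQ : (0:ℝ) < t ^ b := Real.rpow_pos_of_pos ht b
  have h2 : B * ((s ^ b)⁻¹ * (t ^ b)⁻¹) ≤ A * (t ^ b)⁻¹ := by
    rw [Real.rpow_neg (mul_pos hs ht).le, Real.mul_rpow hs.le ht.le, mul_inv,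
      Real.rpow_neg ht.le] at h
    exact h
  have h3 := mul_le_mul_of_nonneg_right h2 (mul_pos hP hQ).le
  have hL : A * (t ^ b)⁻¹ * (s ^ b * t ^ b) = s ^ b * A := by
    field_simp
  have hR : B * ((s ^ b)⁻¹ * (t ^ b)⁻¹) * (s ^ b * t ^ b) = B := by
    field_simp
  rw [hL, hR] at h3
  exact h3

/-- Inequality (2.3): under the structure condition `a₀ ≤ t·a'(t)/a(t) ≤ a₁`, for all `s,t ≥ 0`,
`min(s^a₀, s^a₁)·a(t) ≤ a(s·t) ≤ max(s^a₀, s^a₁)·a(t)`. -/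
theorem stmt_2 (a a' : ℝ → ℝ) (a₀ a₁ : ℝ)
    (ha₀ : 0 < a₀) (ha₀₁ : a₀ ≤ a₁)
    (hcont : ContinuousOn a (Set.Ici 0))
    (hderiv : ∀ t > (0:ℝ), HasDerivAt a (a' t) t)
    (haz : a 0 = 0)
    (hpos : ∀ t > (0:ℝ), 0 < a t)
    (hstruct : ∀ t > (0:ℝ), a₀ ≤ t * a' t / a t ∧ t * a' t / a t ≤ a₁) :
    ∀ s ≥ (0:ℝ), ∀ t ≥ (0:ℝ),
      min (s ^ a₀) (s ^ a₁) * a t ≤ a (s * t) ∧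
      a (s * t) ≤ max (s ^ a₀) (s ^ a₁) * a t := by
  have ha₁ : 0 < a₁ := lt_of_lt_of_le ha₀ ha₀₁
  -- derivative of t ↦ a t * t ^ (-b) on (0, ∞)
  have hda : ∀ b : ℝ, ∀ x > (0:ℝ), HasDerivAt (fun t => a t * t ^ (-b))
      (a' x * x ^ (-b) + a x * (-b * x ^ (-b - 1))) x := by
    intro b x hx
    exact (hderiv x hx).mul (Real.hasDerivAt_rpow_const (Or.inl hx.ne'))
  have hcont' : ∀ b : ℝ, ContinuousOn (fun t => a t * t ^ (-b)) (Ioi 0) := by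
    intro b x hx
    exact ((hda b x hx).continuousAt).continuousWithinAt
  have hdiff : ∀ b : ℝ, DifferentiableOn ℝ (fun t => a t * t ^ (-b)) (interior (Ioi (0:ℝ))) := by
    intro b x hx
    rw [interior_Ioi] at hx
    exact ((hda b x hx).differentiableAt).differentiableWithinAt
  have hexp : ∀ b : ℝ, ∀ x > (0:ℝ), x ^ (-b) = x * x ^ (-b - 1) := by
    intro b x hx
    have h := Real.rpow_add hx 1 (-b - 1)
    rw [Real.rpow_one, show (1:ℝ) + (-b - 1) = -b by ring] at h
    exact h
  have hmono : MonotoneOn (fun t => a t * t ^ (-a₀)) (Ioi 0) := by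
    apply monotoneOn_of_deriv_nonneg (convex_Ioi 0) (hcont' a₀) (hdiff a₀)
    intro x hx
    rw [interior_Ioi] at hx
    rw [(hda a₀ x hx).deriv]
    have hax := hpos x hx
    have h1 : a₀ * a x ≤ x * a' x := by
      have := (hstruct x hx).1
      rw [le_div_iff₀ hax] at this
      linarith
    have h2 : (0:ℝ) < x ^ (-a₀ - 1) := Real.rpow_pos_of_pos hx _
    rw [hexp a₀ x hx]
    nlinarith [mul_nonneg (sub_nonneg.2 h1) h2.le]
  have hanti : AntitoneOn (fun t => a t * t ^ (-a₁)) (Ioi 0) := by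
    apply antitoneOn_of_deriv_nonpos (convex_Ioi 0) (hcont' a₁) (hdiff a₁)
    intro x hx
    rw [interior_Ioi] at hx
    rw [(hda a₁ x hx).deriv]
    have hax := hpos x hx
    have h1 : x * a' x ≤ a₁ * a x := by
      have := (hstruct x hx).2
      rw [div_le_iff₀ hax] at this
      linarith
    have h2 : (0:ℝ) < x ^ (-a₁ - 1) := Real.rpow_pos_of_pos hx _
    rw [hexp a₁ x hx]
    nlinarith [mul_nonneg (sub_nonneg.2 h1) h2.le]
  intro s hs t ht
  rcases eq_or_lt_of_le ht with ht0 | ht'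
  · simp [← ht0, haz]
  rcases eq_or_lt_of_le hs with hs0 | hs'
  · rw [← hs0]
    simp [Real.zero_rpow ha₀.ne', Real.zero_rpow ha₁.ne', haz]
  have hst : 0 < s * t := mul_pos hs' ht'
  rcases le_or_gt 1 s with hs1 | hs1
  · -- s ≥ 1
    have hmin : min (s ^ a₀) (s ^ a₁) = s ^ a₀ :=
      min_eq_left (Real.rpow_le_rpow_of_exponent_le hs1 ha₀₁)
    have hmax : max (s ^ a₀) (s ^ a₁) = s ^ a₁ :=
      max_eq_right (Real.rpow_le_rpow_of_exponent_le hs1 ha₀₁)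
    have hle : t ≤ s * t := le_mul_of_one_le_left ht'.le hs1
    constructor
    · rw [hmin]
      exact step_le (a t) (a (s * t)) s t a₀ hs' ht'
        (hmono (mem_Ioi.2 ht') (mem_Ioi.2 hst) hle)
    · rw [hmax]
      exact step_ge (a t) (a (s * t)) s t a₁ hs' ht'
        (hanti (mem_Ioi.2 ht') (mem_Ioi.2 hst) hle)
  · -- s < 1
    have hmin : min (s ^ a₀) (s ^ a₁) = s ^ a₁ :=
      min_eq_right (Real.rpow_le_rpow_of_exponent_ge hs' hs1.le ha₀₁)
    have hmax : max (s ^ a₀) (s ^ a₁) = s ^ a₀ :=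
      max_eq_left (Real.rpow_le_rpow_of_exponent_ge hs' hs1.le ha₀₁)
    have hle : s * t ≤ t := by nlinarith
    constructor
    · rw [hmin]
      exact step_le (a t) (a (s * t)) s t a₁ hs' ht'
        (hanti (mem_Ioi.2 hst) (mem_Ioi.2 ht') hle)
    · rw [hmax]
      exact step_ge (a t) (a (s * t)) s t a₀ hs' ht'
        (hmono (mem_Ioi.2 hst) (mem_Ioi.2 ht') hle)
end

section
/- If a : [0,∞) → [0,∞) is C¹ with a(0)=0 and a₀ ≤ t·a'(t)/a(t) ≤ a₁ for all t>0, and A(t) = ∫₀ᵗ a, then for all s,t ≥ 0: min(s^{1+a₀}, s^{1+a₁})·A(t)/(1+a₁) ≤ A(s·t) ≤ (1+a₁)·max(s^{1+a₀}, s^{1+a₁})·A(t). -/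
open Real Set

lemma mono_aux (a a' : ℝ → ℝ) (c : ℝ)
    (hcont : ContinuousOn a (Set.Ioi 0))
    (hderiv : ∀ t > (0:ℝ), HasDerivAt a (a' t) t)
    (h : ∀ t > (0:ℝ), c * a t ≤ t * a' t) :
    MonotoneOn (fun x => a x * x ^ (-c)) (Set.Ioi 0) := by
  have hrpow : ∀ x : ℝ, 0 < x → HasDerivAt (fun y : ℝ => y ^ (-c)) (-c * x ^ (-c - 1)) x :=
    fun x hx => Real.hasDerivAt_rpow_const (Or.inl (ne_of_gt hx))
  have hd : ∀ x ∈ Set.Ioi (0:ℝ), HasDerivAt (fun x => a x * x ^ (-c))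
      (a' x * x ^ (-c) + a x * (-c * x ^ (-c - 1))) x := by
    intro x hx
    exact (hderiv x hx).mul (hrpow x hx)
  apply monotoneOn_of_deriv_nonneg (convex_Ioi 0)
  · exact hcont.mul (continuousOn_id.rpow_const (fun x hx => Or.inl (ne_of_gt hx)))
  · rw [interior_Ioi]
    exact fun x hx => (hd x hx).differentiableAt.differentiableWithinAt
  · rw [interior_Ioi]
    intro x hx
    rw [(hd x hx).deriv]
    have hx' : (0:ℝ) < x := hx
    have hfac : x ^ (-c) = x ^ (-c - 1) * x := by
      rw [← Real.rpow_add_one (ne_of_gt hx')]; ring_nf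
    have h1 : (0:ℝ) < x ^ (-c - 1) := Real.rpow_pos_of_pos hx' _
    have h2 := h x hx'
    rw [hfac]
    have : a' x * (x ^ (-c - 1) * x) + a x * (-c * x ^ (-c - 1))
        = x ^ (-c - 1) * (x * a' x - c * a x) := by ring
    rw [this]
    exact mul_nonneg h1.le (by linarith)

/-- From `x·τ^{-c} ≤ y·(sτ)^{-c}` deduce `s^c·x ≤ y`. -/
lemma cancel_aux (c s τ x y : ℝ) (hs : 0 < s) (hτ : 0 < τ)
    (h : x * τ ^ (-c) ≤ y * (s * τ) ^ (-c)) : s ^ c * x ≤ y := by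
  have hP : (0:ℝ) < τ ^ c := Real.rpow_pos_of_pos hτ c
  have hQ : (0:ℝ) < s ^ c := Real.rpow_pos_of_pos hs c
  rw [Real.rpow_neg hτ.le, Real.rpow_neg (mul_pos hs hτ).le,
    Real.mul_rpow hs.le hτ.le] at h
  have h2 := mul_le_mul_of_nonneg_right h (mul_pos hQ hP).le
  have eP : (τ ^ c)⁻¹ * τ ^ c = 1 := inv_mul_cancel₀ hP.ne'
  have eQ : (s ^ c * τ ^ c)⁻¹ * (s ^ c * τ ^ c) = 1 := inv_mul_cancel₀ (mul_pos hQ hP).ne'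
  calc s ^ c * x = x * (τ ^ c)⁻¹ * (s ^ c * τ ^ c) := by
        linear_combination (-(s ^ c * x)) * eP
    _ ≤ y * (s ^ c * τ ^ c)⁻¹ * (s ^ c * τ ^ c) := h2
    _ = y := by linear_combination y * eQ

/-- From `y·(sτ)^{-c} ≤ x·τ^{-c}` deduce `y ≤ s^c·x`. -/
lemma cancel_aux' (c s τ x y : ℝ) (hs : 0 < s) (hτ : 0 < τ)
    (h : y * (s * τ) ^ (-c) ≤ x * τ ^ (-c)) : y ≤ s ^ c * x := by
  have hP : (0:ℝ) < τ ^ c := Real.rpow_pos_of_pos hτ c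
  have hQ : (0:ℝ) < s ^ c := Real.rpow_pos_of_pos hs c
  rw [Real.rpow_neg hτ.le, Real.rpow_neg (mul_pos hs hτ).le,
    Real.mul_rpow hs.le hτ.le] at h
  have h2 := mul_le_mul_of_nonneg_right h (mul_pos hQ hP).le
  have eP : (τ ^ c)⁻¹ * τ ^ c = 1 := inv_mul_cancel₀ hP.ne'
  have eQ : (s ^ c * τ ^ c)⁻¹ * (s ^ c * τ ^ c) = 1 := inv_mul_cancel₀ (mul_pos hQ hP).ne'
  calc y = y * (s ^ c * τ ^ c)⁻¹ * (s ^ c * τ ^ c) := by linear_combination (-y) * eQ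
    _ ≤ x * (τ ^ c)⁻¹ * (s ^ c * τ ^ c) := h2
    _ = s ^ c * x := by linear_combination (s ^ c * x) * eP

/-- Inequality (2.4): under the structure condition, with `A(t) = ∫₀ᵗ a(s) ds`, for all `s,t ≥ 0`,
`min(s^{1+a₀}, s^{1+a₁})·A(t)/(1+a₁) ≤ A(s·t) ≤ (1+a₁)·max(s^{1+a₀}, s^{1+a₁})·A(t)`. -/
theorem stmt_3 (a a' : ℝ → ℝ) (a₀ a₁ : ℝ)
    (ha₀ : 0 < a₀) (ha₀₁ : a₀ ≤ a₁)
    (hcont : ContinuousOn a (Set.Ici 0))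
    (hderiv : ∀ t > (0:ℝ), HasDerivAt a (a' t) t)
    (haz : a 0 = 0)
    (hpos : ∀ t > (0:ℝ), 0 < a t)
    (hstruct : ∀ t > (0:ℝ), a₀ ≤ t * a' t / a t ∧ t * a' t / a t ≤ a₁) :
    ∀ s ≥ (0:ℝ), ∀ t ≥ (0:ℝ),
      min (s ^ (1 + a₀)) (s ^ (1 + a₁)) * (∫ τ in (0:ℝ)..t, a τ) / (1 + a₁)
        ≤ (∫ τ in (0:ℝ)..(s * t), a τ) ∧
      (∫ τ in (0:ℝ)..(s * t), a τ)
        ≤ (1 + a₁) * max (s ^ (1 + a₀)) (s ^ (1 + a₁)) * (∫ τ in (0:ℝ)..t, a τ) := by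
  intro s hs t ht
  have ha₁ : 0 < a₁ := lt_of_lt_of_le ha₀ ha₀₁
  -- nonnegativity of a
  have hanonneg : ∀ x : ℝ, 0 ≤ x → 0 ≤ a x := by
    intro x hx
    rcases eq_or_lt_of_le hx with h | h
    · rw [← h, haz]
    · exact (hpos x h).le
  -- integrability on [0,u]
  have hIa : ∀ u : ℝ, 0 ≤ u → IntervalIntegrable a MeasureTheory.volume 0 u := by
    intro u hu
    exact (hcont.mono (by rw [uIcc_of_le hu]; exact Icc_subset_Ici_self)).intervalIntegrable
  have hAt : 0 ≤ ∫ τ in (0:ℝ)..t, a τ :=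
    intervalIntegral.integral_nonneg ht (fun u hu => hanonneg u hu.1)
  rcases eq_or_lt_of_le hs with hs0 | hs0
  · -- s = 0
    rw [← hs0]
    simp [Real.zero_rpow (ne_of_gt (by linarith : (0:ℝ) < 1 + a₀)),
      Real.zero_rpow (ne_of_gt (by linarith : (0:ℝ) < 1 + a₁))]
  -- s > 0
  have hlb : ∀ x > (0:ℝ), a₀ * a x ≤ x * a' x := by
    intro x hx
    have := (hstruct x hx).1
    rw [le_div_iff₀ (hpos x hx)] at this
    linarith
  have hub : ∀ x > (0:ℝ), a₁ * (-a x) ≤ x * (-a' x) := by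
    intro x hx
    have := (hstruct x hx).2
    rw [div_le_iff₀ (hpos x hx)] at this
    linarith
  have hmono := mono_aux a a' a₀ (hcont.mono Ioi_subset_Ici_self) hderiv hlb
  have hanti := mono_aux (fun x => -a x) (fun x => -a' x) a₁
    ((hcont.mono Ioi_subset_Ici_self).neg) (fun x hx => (hderiv x hx).neg) hub
  set m := min (s ^ a₀) (s ^ a₁) with hm
  set M := max (s ^ a₀) (s ^ a₁) with hM
  have hm0 : 0 ≤ m := le_min (Real.rpow_pos_of_pos hs0 _).le (Real.rpow_pos_of_pos hs0 _).le
  have hM0 : 0 ≤ M := le_trans hm0 (min_le_max)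
  -- pointwise bounds
  have hpt : ∀ τ : ℝ, 0 ≤ τ → m * a τ ≤ a (s * τ) ∧ a (s * τ) ≤ M * a τ := by
    intro τ hτ
    rcases eq_or_lt_of_le hτ with h0 | h0
    · rw [← h0, mul_zero, haz, mul_zero, mul_zero]; exact ⟨le_refl 0, le_refl 0⟩
    have hsτ : 0 < s * τ := mul_pos hs0 h0
    rcases le_total 1 s with h1 | h1
    · -- s ≥ 1, τ ≤ s*τ
      have hle : τ ≤ s * τ := le_mul_of_one_le_left h0.le h1
      have e1 := hmono (mem_Ioi.mpr h0) (mem_Ioi.mpr hsτ) hle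
      have e2 := hanti (mem_Ioi.mpr h0) (mem_Ioi.mpr hsτ) hle
      simp only at e1 e2
      have l1 : s ^ a₀ * a τ ≤ a (s * τ) := cancel_aux a₀ s τ _ _ hs0 h0 e1
      have l2 : s ^ a₁ * (-a τ) ≤ -a (s * τ) := cancel_aux a₁ s τ _ _ hs0 h0 e2
      constructor
      · exact le_trans (mul_le_mul_of_nonneg_right (min_le_left _ _) (hanonneg τ hτ)) l1
      · have : a (s * τ) ≤ s ^ a₁ * a τ := by nlinarith [l2]
        exact le_trans this (mul_le_mul_of_nonneg_right (le_max_right _ _) (hanonneg τ hτ))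
    · -- s ≤ 1, s*τ ≤ τ
      have hle : s * τ ≤ τ := mul_le_of_le_one_left h0.le h1
      have e1 := hmono (mem_Ioi.mpr hsτ) (mem_Ioi.mpr h0) hle
      have e2 := hanti (mem_Ioi.mpr hsτ) (mem_Ioi.mpr h0) hle
      simp only at e1 e2
      have l1 : a (s * τ) ≤ s ^ a₀ * a τ := cancel_aux' a₀ s τ _ _ hs0 h0 e1
      have l2 : -a (s * τ) ≤ s ^ a₁ * (-a τ) := cancel_aux' a₁ s τ _ _ hs0 h0 e2
      constructor
      · have : s ^ a₁ * a τ ≤ a (s * τ) := by nlinarith [l2]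
        exact le_trans (mul_le_mul_of_nonneg_right (min_le_right _ _) (hanonneg τ hτ)) this
      · exact le_trans l1 (mul_le_mul_of_nonneg_right (le_max_left _ _) (hanonneg τ hτ))
  -- change of variables
  have hsub : (∫ τ in (0:ℝ)..(s * t), a τ) = s * ∫ τ in (0:ℝ)..t, a (s * τ) := by
    have := intervalIntegral.smul_integral_comp_mul_left (a := (0:ℝ)) (b := t) (f := a) s
    rw [mul_zero] at this
    rw [← this, smul_eq_mul]
  -- integrability of composed function
  have hIas : IntervalIntegrable (fun τ => a (s * τ)) MeasureTheory.volume 0 t := by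
    apply ContinuousOn.intervalIntegrable
    apply hcont.comp ((continuous_const.mul continuous_id).continuousOn)
    intro x hx
    rw [uIcc_of_le ht] at hx
    exact mul_nonneg hs0.le hx.1
  have hint_low : m * ∫ τ in (0:ℝ)..t, a τ ≤ ∫ τ in (0:ℝ)..t, a (s * τ) := by
    rw [← intervalIntegral.integral_const_mul]
    apply intervalIntegral.integral_mono_on ht ((hIa t ht).const_mul m) hIas
    exact fun τ hτ => (hpt τ hτ.1).1
  have hint_high : (∫ τ in (0:ℝ)..t, a (s * τ)) ≤ M * ∫ τ in (0:ℝ)..t, a τ := by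
    rw [← intervalIntegral.integral_const_mul]
    apply intervalIntegral.integral_mono_on ht hIas ((hIa t ht).const_mul M)
    exact fun τ hτ => (hpt τ hτ.1).2
  -- relate s*m, s*M to the min/max of s^(1+a₀), s^(1+a₁)
  have hrw : ∀ c : ℝ, s ^ (1 + c) = s * s ^ c := by
    intro c
    rw [Real.rpow_add hs0, Real.rpow_one]
  have hminrw : min (s ^ (1 + a₀)) (s ^ (1 + a₁)) = s * m := by
    rw [hrw, hrw, hm, mul_min_of_nonneg _ _ hs0.le]
  have hmaxrw : max (s ^ (1 + a₀)) (s ^ (1 + a₁)) = s * M := by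
    rw [hrw, hrw, hM, mul_max_of_nonneg _ _ hs0.le]
  have key_low : min (s ^ (1 + a₀)) (s ^ (1 + a₁)) * (∫ τ in (0:ℝ)..t, a τ)
      ≤ ∫ τ in (0:ℝ)..(s * t), a τ := by
    rw [hminrw, hsub, mul_assoc]
    exact mul_le_mul_of_nonneg_left hint_low hs0.le
  have key_high : (∫ τ in (0:ℝ)..(s * t), a τ)
      ≤ max (s ^ (1 + a₀)) (s ^ (1 + a₁)) * (∫ τ in (0:ℝ)..t, a τ) := by
    rw [hmaxrw, hsub, mul_assoc]
    exact mul_le_mul_of_nonneg_left hint_high hs0.le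
  have hmin0 : 0 ≤ min (s ^ (1 + a₀)) (s ^ (1 + a₁)) * (∫ τ in (0:ℝ)..t, a τ) := by
    rw [hminrw]; positivity
  have hmax0 : 0 ≤ max (s ^ (1 + a₀)) (s ^ (1 + a₁)) * (∫ τ in (0:ℝ)..t, a τ) := by
    rw [hmaxrw]; positivity
  constructor
  · have := div_le_self hmin0 (by linarith : (1:ℝ) ≤ 1 + a₁)
    linarith
  · nlinarith [key_high, hmax0]
end

section
/- If a : [0,∞) → [0,∞) is a C¹ increasing bijection with a(0)=0 and a₀ ≤ t·a'(t)/a(t) ≤ a₁ for all t>0, then its inverse a⁻¹ satisfies min(s^{1/a₀}, s^{1/a₁})·a⁻¹(t) ≤ a⁻¹(s·t) ≤ max(s^{1/a₀}, s^{1/a₁})·a⁻¹(t) for all s,t ≥ 0. -/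
/-!
The structure condition `a₀ ≤ t a'(t) / a(t) ≤ a₁` says exactly that `a(t) t^{-a₀}` is
nondecreasing and `a(t) t^{-a₁}` is nonincreasing on `(0, ∞)`. Comparing these quotients at `u`
and `c u` gives `c^{a₀} a(u) ≤ a(c u) ≤ c^{a₁} a(u)` for `c ≥ 1` (reversed for `c ≤ 1`); choosing
`c = s^{1/a₀}` or `c = s^{1/a₁}`, so that `c^{aᵢ} = s`, and applying the increasing function
`a⁻¹` turns these into the bounds for `a⁻¹(s t)` in terms of `a⁻¹(t)`.
-/

open Real Set

section ScalingQuotient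

variable {a a' : ℝ → ℝ} {p : ℝ}

lemma hasDerivAt_mul_rpow_neg {t : ℝ} (ht : 0 < t) (ha : HasDerivAt a (a' t) t) :
    HasDerivAt (fun t => a t * t ^ (-p)) (t ^ (-p - 1) * (t * a' t - p * a t)) t := by
  refine (ha.mul (hasDerivAt_rpow_const (p := -p) (Or.inl ht.ne'))).congr_deriv ?_
  rw [rpow_sub ht, rpow_one]
  field_simp
  ring

lemma monotoneOn_mul_rpow_neg (hderiv : ∀ t > (0:ℝ), HasDerivAt a (a' t) t)
    (h : ∀ t > (0:ℝ), p * a t ≤ t * a' t) :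
    MonotoneOn (fun t => a t * t ^ (-p)) (Ioi 0) := by
  have hF (t : ℝ) (ht : t ∈ Ioi (0:ℝ)) := hasDerivAt_mul_rpow_neg (p := p) ht (hderiv t ht)
  refine monotoneOn_of_deriv_nonneg (convex_Ioi 0)
    (fun t ht => (hF t ht).continuousAt.continuousWithinAt) ?_ ?_
  all_goals rw [interior_Ioi]; intro t ht
  · exact (hF t ht).differentiableAt.differentiableWithinAt
  · rw [(hF t ht).deriv]
    exact mul_nonneg (rpow_nonneg (le_of_lt ht) _) (sub_nonneg.mpr (h t ht))

lemma antitoneOn_mul_rpow_neg (hderiv : ∀ t > (0:ℝ), HasDerivAt a (a' t) t)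
    (h : ∀ t > (0:ℝ), t * a' t ≤ p * a t) :
    AntitoneOn (fun t => a t * t ^ (-p)) (Ioi 0) := by
  have hF (t : ℝ) (ht : t ∈ Ioi (0:ℝ)) := hasDerivAt_mul_rpow_neg (p := p) ht (hderiv t ht)
  refine antitoneOn_of_deriv_nonpos (convex_Ioi 0)
    (fun t ht => (hF t ht).continuousAt.continuousWithinAt) ?_ ?_
  all_goals rw [interior_Ioi]; intro t ht
  · exact (hF t ht).differentiableAt.differentiableWithinAt
  · rw [(hF t ht).deriv]
    exact mul_nonpos_of_nonneg_of_nonpos (rpow_nonneg (le_of_lt ht) _) (sub_nonpos.mpr (h t ht))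

lemma sub_rpow_mul_eq {u c : ℝ} (hu : 0 < u) (hc : 0 < c) :
    a (c * u) - c ^ p * a u = (c * u) ^ p * (a (c * u) * (c * u) ^ (-p) - a u * u ^ (-p)) := by
  rw [rpow_neg (mul_pos hc hu).le, rpow_neg hu.le, mul_rpow hc.le hu.le]
  have := rpow_pos_of_pos hc p
  have := rpow_pos_of_pos hu p
  field_simp

lemma rpow_mul_le_iff {u c : ℝ} (hu : 0 < u) (hc : 0 < c) :
    c ^ p * a u ≤ a (c * u) ↔ a u * u ^ (-p) ≤ a (c * u) * (c * u) ^ (-p) := by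
  rw [← sub_nonneg, sub_rpow_mul_eq hu hc,
    mul_nonneg_iff_of_pos_left (rpow_pos_of_pos (mul_pos hc hu) p), sub_nonneg]

lemma le_rpow_mul_iff {u c : ℝ} (hu : 0 < u) (hc : 0 < c) :
    a (c * u) ≤ c ^ p * a u ↔ a (c * u) * (c * u) ^ (-p) ≤ a u * u ^ (-p) := by
  rw [← sub_nonpos, sub_rpow_mul_eq hu hc,
    ← mul_zero ((c * u) ^ p), mul_le_mul_iff_of_pos_left (rpow_pos_of_pos (mul_pos hc hu) p),
    sub_nonpos]

end ScalingQuotient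

section InverseScaling

variable {a : ℝ → ℝ} {p q s u v : ℝ}

lemma rpow_inv_mul_bounds_of_monotoneOn (ha : StrictMonoOn a (Ici 0))
    (hg : MonotoneOn (fun t => a t * t ^ (-p)) (Ioi 0)) (hp : 0 < p)
    (hs : 0 < s) (hu : 0 < u) (hv : 0 ≤ v) (hav : a v = s * a u) :
    (1 ≤ s → v ≤ s ^ (1 / p) * u) ∧ (s ≤ 1 → s ^ (1 / p) * u ≤ v) := by
  have hcp : (s ^ (1 / p)) ^ p = s := by rw [one_div, rpow_inv_rpow hs.le hp.ne']
  set c := s ^ (1 / p)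
  have hc : 0 < c := rpow_pos_of_pos hs _
  have hcu : 0 < c * u := mul_pos hc hu
  rw [← hcp] at hav
  refine ⟨fun hs1 => ?_, fun hs1 => ?_⟩
  · have hc1 : 1 ≤ c := one_le_rpow hs1 (by positivity)
    refine (ha.le_iff_le hv hcu.le).mp (hav ▸ (rpow_mul_le_iff hu hc).mpr ?_)
    exact hg hu hcu (le_mul_of_one_le_left hu.le hc1)
  · have hc1 : c ≤ 1 := rpow_le_one hs.le hs1 (by positivity)
    refine (ha.le_iff_le hcu.le hv).mp (hav ▸ (le_rpow_mul_iff hu hc).mpr ?_)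
    exact hg hcu hu (mul_le_of_le_one_left hu.le hc1)

lemma rpow_inv_mul_bounds_of_antitoneOn (ha : StrictMonoOn a (Ici 0))
    (hg : AntitoneOn (fun t => a t * t ^ (-q)) (Ioi 0)) (hq : 0 < q)
    (hs : 0 < s) (hu : 0 < u) (hv : 0 ≤ v) (hav : a v = s * a u) :
    (1 ≤ s → s ^ (1 / q) * u ≤ v) ∧ (s ≤ 1 → v ≤ s ^ (1 / q) * u) := by
  have hcq : (s ^ (1 / q)) ^ q = s := by rw [one_div, rpow_inv_rpow hs.le hq.ne']
  set c := s ^ (1 / q)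
  have hc : 0 < c := rpow_pos_of_pos hs _
  have hcu : 0 < c * u := mul_pos hc hu
  rw [← hcq] at hav
  refine ⟨fun hs1 => ?_, fun hs1 => ?_⟩
  · have hc1 : 1 ≤ c := one_le_rpow hs1 (by positivity)
    refine (ha.le_iff_le hcu.le hv).mp (hav ▸ (le_rpow_mul_iff hu hc).mpr ?_)
    exact hg hu hcu (le_mul_of_one_le_left hu.le hc1)
  · have hc1 : c ≤ 1 := rpow_le_one hs.le hs1 (by positivity)
    refine (ha.le_iff_le hv hcu.le).mp (hav ▸ (rpow_mul_le_iff hu hc).mpr ?_)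
    exact hg hcu hu (mul_le_of_le_one_left hu.le hc1)

lemma rpow_inv_mul_bounds (ha : StrictMonoOn a (Ici 0))
    (hg₀ : MonotoneOn (fun t => a t * t ^ (-p)) (Ioi 0))
    (hg₁ : AntitoneOn (fun t => a t * t ^ (-q)) (Ioi 0)) (hp : 0 < p) (hq : 0 < q)
    (hs : 0 < s) (hu : 0 < u) (hv : 0 ≤ v) (hav : a v = s * a u) :
    min (s ^ (1 / p)) (s ^ (1 / q)) * u ≤ v ∧ v ≤ max (s ^ (1 / p)) (s ^ (1 / q)) * u := by
  obtain ⟨hp₁, hp₂⟩ := rpow_inv_mul_bounds_of_monotoneOn ha hg₀ hp hs hu hv hav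
  obtain ⟨hq₁, hq₂⟩ := rpow_inv_mul_bounds_of_antitoneOn ha hg₁ hq hs hu hv hav
  rcases le_total 1 s with hs1 | hs1
  · exact ⟨(mul_le_mul_of_nonneg_right (min_le_right _ _) hu.le).trans (hq₁ hs1),
      (hp₁ hs1).trans (mul_le_mul_of_nonneg_right (le_max_left _ _) hu.le)⟩
  · exact ⟨(mul_le_mul_of_nonneg_right (min_le_left _ _) hu.le).trans (hp₂ hs1),
      (hq₂ hs1).trans (mul_le_mul_of_nonneg_right (le_max_right _ _) hu.le)⟩

end InverseScaling

theorem stmt_4_general (a a' ainv : ℝ → ℝ) (a₀ a₁ : ℝ)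
    (ha₀ : 0 < a₀) (ha₀₁ : a₀ ≤ a₁)
    (hderiv : ∀ t > (0:ℝ), HasDerivAt a (a' t) t)
    (haz : a 0 = 0)
    (hpos : ∀ t > (0:ℝ), 0 < a t)
    (hmono : StrictMonoOn a (Set.Ici 0))
    (hstruct : ∀ t > (0:ℝ), a₀ ≤ t * a' t / a t ∧ t * a' t / a t ≤ a₁)
    (hainv_nn : ∀ t ≥ (0:ℝ), 0 ≤ ainv t)
    (hainv_right : ∀ t ≥ (0:ℝ), a (ainv t) = t)
    (hainv_left : ∀ t ≥ (0:ℝ), ainv (a t) = t) :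
    ∀ s ≥ (0:ℝ), ∀ t ≥ (0:ℝ),
      min (s ^ (1/a₀)) (s ^ (1/a₁)) * ainv t ≤ ainv (s * t) ∧
      ainv (s * t) ≤ max (s ^ (1/a₀)) (s ^ (1/a₁)) * ainv t := by
  have ha₁ : 0 < a₁ := ha₀.trans_le ha₀₁
  have hainv_zero : ainv 0 = 0 := by simpa [haz] using hainv_left 0 le_rfl
  have hg₀ := monotoneOn_mul_rpow_neg hderiv fun t ht =>
    (le_div_iff₀ (hpos t ht)).mp (hstruct t ht).1
  have hg₁ := antitoneOn_mul_rpow_neg hderiv fun t ht =>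
    (div_le_iff₀ (hpos t ht)).mp (hstruct t ht).2
  intro s hs t ht
  rcases hs.eq_or_lt with rfl | hs
  · simp [hainv_zero, zero_rpow, ha₀.ne', ha₁.ne']
  rcases ht.eq_or_lt with rfl | ht
  · simp [hainv_zero]
  have hu : 0 < ainv t := (hainv_nn t ht.le).lt_of_ne fun h =>
    ht.ne (by simpa [← h, haz] using hainv_right t ht.le)
  refine rpow_inv_mul_bounds hmono hg₀ hg₁ ha₀ ha₁ hs hu (hainv_nn _ (by positivity)) ?_
  rw [hainv_right _ (by positivity), hainv_right _ ht.le]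

/-- Inequality (2.5): if `a` is a `C¹` increasing bijection of `[0,∞)` with `a(0)=0` satisfying
the structure condition, then its inverse `a⁻¹` satisfies
`min(s^{1/a₀}, s^{1/a₁})·a⁻¹(t) ≤ a⁻¹(s·t) ≤ max(s^{1/a₀}, s^{1/a₁})·a⁻¹(t)` for `s,t ≥ 0`. -/
theorem stmt_4 (a a' ainv : ℝ → ℝ) (a₀ a₁ : ℝ)
    (ha₀ : 0 < a₀) (ha₀₁ : a₀ ≤ a₁)
    (hcont : ContinuousOn a (Set.Ici 0))
    (hderiv : ∀ t > (0:ℝ), HasDerivAt a (a' t) t)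
    (haz : a 0 = 0)
    (hpos : ∀ t > (0:ℝ), 0 < a t)
    (hmono : StrictMonoOn a (Set.Ici 0))
    (hsurj : ∀ y ≥ (0:ℝ), ∃ t ≥ (0:ℝ), a t = y)
    (hstruct : ∀ t > (0:ℝ), a₀ ≤ t * a' t / a t ∧ t * a' t / a t ≤ a₁)
    (hainv_nn : ∀ t ≥ (0:ℝ), 0 ≤ ainv t)
    (hainv_right : ∀ t ≥ (0:ℝ), a (ainv t) = t)
    (hainv_left : ∀ t ≥ (0:ℝ), ainv (a t) = t) :
    ∀ s ≥ (0:ℝ), ∀ t ≥ (0:ℝ),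
      min (s ^ (1/a₀)) (s ^ (1/a₁)) * ainv t ≤ ainv (s * t) ∧
      ainv (s * t) ≤ max (s ^ (1/a₀)) (s ^ (1/a₁)) * ainv t :=
  stmt_4_general a a' ainv a₀ a₁ ha₀ ha₀₁ hderiv haz hpos hmono hstruct hainv_nn hainv_right
    hainv_left
end

section
/- If a : [0,∞) → [0,∞) is a C¹ increasing bijection with a(0)=0 satisfying a₀ ≤ t·a'(t)/a(t) ≤ a₁ for t>0, and Ã(t) = ∫₀ᵗ a⁻¹(s) ds is the complementary function, then (a₀/(1+a₀))·t·a⁻¹(t) ≤ Ã(t) ≤ t·a⁻¹(t) for all t ≥ 0. -/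
open Real Set

/-
Let `g = a⁻¹`. Differentiating the inverse, `(u · g(u))' = g(u) + a(τ)/a'(τ)` with `τ = g(u)`, and
the structure condition `a₀ · a(τ) ≤ τ · a'(τ)` bounds the second term by `g(u)/a₀`. Integrating
over `[0, t]` gives `t · g(t) ≤ (1 + 1/a₀) · Ã(t)`. The upper bound holds because `g` is increasing.
-/

theorem StrictMonoOn.strictMonoOn_of_leftInvOn {f g : ℝ → ℝ} {s t : Set ℝ}
    (hf : StrictMonoOn f s) (hg : MapsTo g t s) (hfg : LeftInvOn f g t) : StrictMonoOn g t :=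
  fun x hx y hy hxy => (hf.lt_iff_lt (hg hx) (hg hy)).1 (by rwa [hfg hx, hfg hy])

theorem continuousOn_Ici_of_strictMonoOn_of_surjOn {g : ℝ → ℝ} {a b : ℝ}
    (hg : StrictMonoOn g (Ici a)) (hmaps : MapsTo g (Ici a) (Ici b))
    (hsurj : SurjOn g (Ici a) (Ici b)) : ContinuousOn g (Ici a) := by
  intro x hx
  rcases (mem_Ici.1 hx).eq_or_lt with rfl | hax
  · refine continuousWithinAt_right_of_monotoneOn_of_image_mem_nhdsWithin hg.monotoneOn
      self_mem_nhdsWithin (Filter.mem_of_superset self_mem_nhdsWithin ?_)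
    exact (Ici_subset_Ici.2 (hmaps hx)).trans hsurj
  · have hbx : b < g x := (hmaps self_mem_Ici).trans_lt (hg self_mem_Ici hx hax)
    exact (continuousAt_of_monotoneOn_of_image_mem_nhds hg.monotoneOn (Ici_mem_nhds hax)
      (Filter.mem_of_superset (Ici_mem_nhds hbx) hsurj)).continuousWithinAt

section Inverse

variable {f f' g : ℝ → ℝ}

theorem continuousOn_Ici_of_leftInvOn (hf : StrictMonoOn f (Ici 0)) (hf0 : f 0 = 0)
    (hg : MapsTo g (Ici 0) (Ici 0)) (hfg : LeftInvOn f g (Ici 0)) : ContinuousOn g (Ici 0) := by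
  have hmaps : MapsTo f (Ici 0) (Ici 0) := fun x hx => hf0 ▸ hf.monotoneOn self_mem_Ici hx hx
  exact continuousOn_Ici_of_strictMonoOn_of_surjOn (hf.strictMonoOn_of_leftInvOn hg hfg) hg
    ((hf.injOn.rightInvOn_of_leftInvOn hfg hmaps hg).surjOn hmaps)

theorem hasDerivAt_of_leftInvOn (hf : StrictMonoOn f (Ici 0)) (hf0 : f 0 = 0)
    (hg : MapsTo g (Ici 0) (Ici 0)) (hfg : LeftInvOn f g (Ici 0)) {u : ℝ} (hu : 0 < u)
    (hderiv : HasDerivAt f (f' (g u)) (g u)) (hf' : f' (g u) ≠ 0) :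
    HasDerivAt g (f' (g u))⁻¹ u :=
  hderiv.of_local_left_inverse
    ((continuousOn_Ici_of_leftInvOn hf hf0 hg hfg).continuousAt (Ici_mem_nhds hu)) hf'
    ((eventually_ge_nhds hu).mono fun _ hx => hfg hx)

end Inverse

theorem intervalIntegral.integral_le_mul_of_monotoneOn {g : ℝ → ℝ} {a b : ℝ} (hab : a ≤ b)
    (hg : MonotoneOn g (Icc a b)) : ∫ u in a..b, g u ≤ (b - a) * g b := by
  rw [← uIcc_of_le hab] at hg
  calc ∫ u in a..b, g u ≤ ∫ _ in a..b, g b :=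
        integral_mono_on hab hg.intervalIntegrable intervalIntegrable_const
          fun u hu => hg (Icc_subset_uIcc hu) right_mem_uIcc hu.2
    _ = (b - a) * g b := by simp

theorem mul_le_integral_of_mul_deriv_le {g g' : ℝ → ℝ} {a₀ t : ℝ} (ha₀ : 0 < a₀)
    (ht : 0 ≤ t) (hcont : ContinuousOn g (Icc 0 t)) (hmono : MonotoneOn g (Icc 0 t))
    (hderiv : ∀ u ∈ Ioo 0 t, HasDerivAt g (g' u) u) (hg : ∀ u ∈ Ioo 0 t, 0 ≤ g u)
    (hg' : ∀ u ∈ Ioo 0 t, 0 ≤ g' u)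
    (hle : ∀ u ∈ Ioo 0 t, a₀ * (u * g' u) ≤ g u) :
    a₀ / (1 + a₀) * (t * g t) ≤ ∫ u in 0..t, g u := by
  rw [← uIcc_of_le ht] at hcont hmono
  have hint : IntervalIntegrable g MeasureTheory.volume 0 t := hmono.intervalIntegrable
  have hcont' : ContinuousOn (fun u => u * g u) (uIcc 0 t) := by fun_prop
  have hprod : ∀ u ∈ Ioo 0 t, HasDerivAt (fun u => u * g u) (g u + u * g' u) u := fun u hu => by
    simpa using (hasDerivAt_id' u).fun_mul (hderiv u hu)
  have hint' : IntervalIntegrable (fun u => g u + u * g' u) MeasureTheory.volume 0 t := by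
    refine intervalIntegral.intervalIntegrable_deriv_of_nonneg hcont' ?_ ?_ <;>
      simp only [min_eq_left ht, max_eq_right ht]
    · exact hprod
    · exact fun u hu => add_nonneg (hg u hu) (mul_nonneg hu.1.le (hg' u hu))
  have hderiv_le : ∀ u ∈ Ioo 0 t, g u + u * g' u ≤ (1 + a₀⁻¹) * g u := fun u hu => by
    rw [add_mul, one_mul]
    exact add_le_add_right ((le_inv_mul_iff₀ ha₀).2 (hle u hu)) _
  have hmain : t * g t ≤ (1 + a₀⁻¹) * ∫ u in 0..t, g u := by
    calc t * g t = ∫ u in 0..t, (g u + u * g' u) := by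
          rw [intervalIntegral.integral_eq_sub_of_hasDerivAt_of_le ht
            (by rwa [← uIcc_of_le ht]) hprod hint']
          simp
      _ ≤ ∫ u in 0..t, (1 + a₀⁻¹) * g u :=
          intervalIntegral.integral_mono_on_of_le_Ioo ht hint' (hint.const_mul _) hderiv_le
      _ = (1 + a₀⁻¹) * ∫ u in 0..t, g u := intervalIntegral.integral_const_mul _ _
  calc a₀ / (1 + a₀) * (t * g t)
      ≤ a₀ / (1 + a₀) * ((1 + a₀⁻¹) * ∫ u in 0..t, g u) := by gcongr
    _ = ∫ u in 0..t, g u := by field_simp; ring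

section StructureCondition

variable {f f' : ℝ → ℝ} {a₀ τ : ℝ}

theorem deriv_pos_of_le_mul_deriv_div (ha₀ : 0 < a₀) (hτ : 0 < τ) (hfτ : 0 < f τ)
    (h : a₀ ≤ τ * f' τ / f τ) : 0 < f' τ := by
  rw [le_div_iff₀ hfτ] at h
  exact pos_of_mul_pos_right ((mul_pos ha₀ hfτ).trans_le h) hτ.le

theorem mul_mul_inv_deriv_le_of_le_mul_deriv_div (ha₀ : 0 < a₀) (hτ : 0 < τ) (hfτ : 0 < f τ)
    (h : a₀ ≤ τ * f' τ / f τ) : a₀ * (f τ * (f' τ)⁻¹) ≤ τ := by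
  have hf' := deriv_pos_of_le_mul_deriv_div ha₀ hτ hfτ h
  rw [le_div_iff₀ hfτ] at h
  rw [← mul_assoc, ← div_eq_mul_inv, div_le_iff₀ hf']
  linarith

end StructureCondition

theorem stmt_5_general (a a' ainv : ℝ → ℝ) (a₀ a₁ : ℝ)
    (ha₀ : 0 < a₀)
    (hderiv : ∀ t > (0:ℝ), HasDerivAt a (a' t) t)
    (haz : a 0 = 0)
    (hmono : StrictMonoOn a (Set.Ici 0))
    (hstruct : ∀ t > (0:ℝ), a₀ ≤ t * a' t / a t ∧ t * a' t / a t ≤ a₁)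
    (hainv_nn : ∀ t ≥ (0:ℝ), 0 ≤ ainv t)
    (hainv_right : ∀ t ≥ (0:ℝ), a (ainv t) = t) :
    ∀ t ≥ (0:ℝ),
      a₀ / (1 + a₀) * (t * ainv t) ≤ (∫ s in (0:ℝ)..t, ainv s) ∧
      (∫ s in (0:ℝ)..t, ainv s) ≤ t * ainv t := by
  intro t ht
  have hinv_mono : StrictMonoOn ainv (Ici 0) := hmono.strictMonoOn_of_leftInvOn hainv_nn hainv_right
  have hinv_pos : ∀ u > (0:ℝ), 0 < ainv u := fun u hu =>
    (hainv_nn 0 le_rfl).trans_lt (hinv_mono self_mem_Ici hu.le hu)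
  have hpos : ∀ u > (0:ℝ), 0 < a (ainv u) := fun u hu => (hainv_right u hu.le).symm ▸ hu
  have hstruct' : ∀ u > (0:ℝ), a₀ ≤ ainv u * a' (ainv u) / a (ainv u) := fun u hu =>
    (hstruct _ (hinv_pos u hu)).1
  have hderiv_pos : ∀ u > (0:ℝ), 0 < a' (ainv u) := fun u hu =>
    deriv_pos_of_le_mul_deriv_div ha₀ (hinv_pos u hu) (hpos u hu) (hstruct' u hu)
  refine ⟨?_, ?_⟩
  · refine mul_le_integral_of_mul_deriv_le ha₀ ht
      ((continuousOn_Ici_of_leftInvOn hmono haz hainv_nn hainv_right).mono Icc_subset_Ici_self)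
      (hinv_mono.monotoneOn.mono Icc_subset_Ici_self)
      (fun u hu => hasDerivAt_of_leftInvOn hmono haz hainv_nn hainv_right hu.1
        (hderiv _ (hinv_pos u hu.1)) (hderiv_pos u hu.1).ne')
      (fun u hu => hainv_nn u hu.1.le) (fun u hu => (inv_pos.2 (hderiv_pos u hu.1)).le)
      fun u hu => ?_
    simpa only [hainv_right u hu.1.le] using
      mul_mul_inv_deriv_le_of_le_mul_deriv_div ha₀ (hinv_pos u hu.1) (hpos u hu.1) (hstruct' u hu.1)
  · simpa using intervalIntegral.integral_le_mul_of_monotoneOn ht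
      (hinv_mono.monotoneOn.mono Icc_subset_Ici_self)

/-- Inequality (2.6): if `a` is a `C¹` increasing bijection of `[0,∞)` with `a(0)=0` satisfying
the structure condition, and `Ã(t) = ∫₀ᵗ a⁻¹(s) ds` is the complementary function, then
`(a₀/(1+a₀))·t·a⁻¹(t) ≤ Ã(t) ≤ t·a⁻¹(t)` for all `t ≥ 0`. -/
theorem stmt_5 (a a' ainv : ℝ → ℝ) (a₀ a₁ : ℝ)
    (ha₀ : 0 < a₀) (ha₀₁ : a₀ ≤ a₁)
    (hcont : ContinuousOn a (Set.Ici 0))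
    (hderiv : ∀ t > (0:ℝ), HasDerivAt a (a' t) t)
    (haz : a 0 = 0)
    (hpos : ∀ t > (0:ℝ), 0 < a t)
    (hmono : StrictMonoOn a (Set.Ici 0))
    (hsurj : ∀ y ≥ (0:ℝ), ∃ t ≥ (0:ℝ), a t = y)
    (hstruct : ∀ t > (0:ℝ), a₀ ≤ t * a' t / a t ∧ t * a' t / a t ≤ a₁)
    (hainv_nn : ∀ t ≥ (0:ℝ), 0 ≤ ainv t)
    (hainv_right : ∀ t ≥ (0:ℝ), a (ainv t) = t)
    (hainv_left : ∀ t ≥ (0:ℝ), ainv (a t) = t) :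
    ∀ t ≥ (0:ℝ),
      a₀ / (1 + a₀) * (t * ainv t) ≤ (∫ s in (0:ℝ)..t, ainv s) ∧
      (∫ s in (0:ℝ)..t, ainv s) ≤ t * ainv t :=
  stmt_5_general a a' ainv a₀ a₁ ha₀ hderiv haz hmono hstruct hainv_nn hainv_right
end

section
/- Let a satisfy the standard structure condition with constants a₀ ≤ a₁, and let p > a₁. Define d(t) := (a⁻¹(t))^p / t for t > 0. Then d₀ ≤ t·d'(t)/d(t) ≤ d₁ for all t > 0, where d₀ = (p - a₁)/a₁ and d₁ = (p - a₀)/a₀. -/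
open Real Set

/-- The function `d(t) = (a⁻¹(t))^p / t`. -/
noncomputable def dP (ainv : ℝ → ℝ) (p t : ℝ) : ℝ := (ainv t) ^ p / t

/-- If `a` is a `C¹` increasing bijection of `(0,∞)` satisfying the structure condition
`a₀ ≤ t·a'(t)/a(t) ≤ a₁`, and `p > a₁`, then `d(t) = (a⁻¹(t))^p / t` satisfies
`(p-a₁)/a₁ ≤ t·d'(t)/d(t) ≤ (p-a₀)/a₀` for all `t > 0`. -/
theorem stmt_7 (a a' ainv : ℝ → ℝ) (a₀ a₁ p : ℝ)
    (ha₀ : 0 < a₀) (ha₀₁ : a₀ ≤ a₁) (hp : a₁ < p)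
    (hpos : ∀ t > (0:ℝ), 0 < a t)
    (hderiv : ∀ t > (0:ℝ), HasDerivAt a (a' t) t)
    (hmono : StrictMonoOn a (Set.Ioi 0))
    (hsurj : ∀ y > (0:ℝ), ∃ t > (0:ℝ), a t = y)
    (hstruct : ∀ t > (0:ℝ), a₀ ≤ t * a' t / a t ∧ t * a' t / a t ≤ a₁)
    (hainv_pos : ∀ t > (0:ℝ), 0 < ainv t)
    (hainv_right : ∀ t > (0:ℝ), a (ainv t) = t)
    (hainv_left : ∀ t > (0:ℝ), ainv (a t) = t) :
    ∀ t > (0:ℝ),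
      (p - a₁) / a₁ ≤ t * deriv (dP ainv p) t / dP ainv p t ∧
      t * deriv (dP ainv p) t / dP ainv p t ≤ (p - a₀) / a₀ := by
  have hp0 : 0 < p := lt_of_le_of_lt (le_of_lt (lt_of_lt_of_le ha₀ ha₀₁)) hp
  -- ainv is strictly monotone on Ioi 0
  have hainv_mono : StrictMonoOn ainv (Set.Ioi 0) := by
    intro x hx y hy hxy
    have hx' := hainv_pos x hx
    have hy' := hainv_pos y hy
    by_contra h
    push_neg at h
    rcases eq_or_lt_of_le h with he | hl
    · have hxe := hainv_right x hx
      rw [← he, hainv_right y hy] at hxe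
      exact absurd hxe.symm (ne_of_lt hxy)
    · have := hmono hy' hx' hl
      rw [hainv_right x hx, hainv_right y hy] at this
      exact absurd hxy (not_lt.mpr (le_of_lt this))
  intro t ht
  set s := ainv t with hs
  have hs0 : 0 < s := hainv_pos t ht
  have hat : a s = t := hainv_right t ht
  have hq := hstruct s hs0
  rw [hat] at hq
  set q := s * a' s / t with hqdef
  have hq0 : 0 < q := lt_of_lt_of_le ha₀ hq.1
  have hA : 0 < a' s := by
    rcases le_or_gt (a' s) 0 with h | h
    · exfalso
      have hnum : s * a' s ≤ 0 := mul_nonpos_of_nonneg_of_nonpos (le_of_lt hs0) h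
      have : q ≤ 0 := div_nonpos_of_nonpos_of_nonneg hnum (le_of_lt ht)
      linarith
    · exact h
  -- continuity of ainv at t
  have hainv_cont : ContinuousAt ainv t := by
    apply hainv_mono.continuousAt_of_image_mem_nhds (Ioi_mem_nhds ht)
    have hsub : Set.Ioi (0:ℝ) ⊆ ainv '' Set.Ioi 0 := fun x hx =>
      ⟨a x, hpos x hx, hainv_left x hx⟩
    exact Filter.mem_of_superset (Ioi_mem_nhds hs0) hsub
  -- derivative of ainv at t
  have hainv_deriv : HasDerivAt ainv (a' s)⁻¹ t := by
    apply HasDerivAt.of_local_left_inverse hainv_cont (hderiv s hs0) (ne_of_gt hA)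
    filter_upwards [Ioi_mem_nhds ht] with y hy using hainv_right y hy
  -- derivative of dP
  have hpow : HasDerivAt (fun x => ainv x ^ p) ((a' s)⁻¹ * p * s ^ (p - 1)) t :=
    hainv_deriv.rpow_const (Or.inl (ne_of_gt hs0))
  have hd : HasDerivAt (dP ainv p)
      (((a' s)⁻¹ * p * s ^ (p - 1) * t - s ^ p * 1) / t ^ 2) t :=
    hpow.div (hasDerivAt_id t) (ne_of_gt ht)
  have hderiv_eq : deriv (dP ainv p) t =
      ((a' s)⁻¹ * p * s ^ (p - 1) * t - s ^ p * 1) / t ^ 2 := hd.deriv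
  have hsp : (0:ℝ) < s ^ p := Real.rpow_pos_of_pos hs0 p
  have hsp1 : s ^ (p - 1) = s ^ p / s := by
    rw [Real.rpow_sub hs0, Real.rpow_one]
  -- key identity: t * d'/d = p/q - 1
  have hkey : t * deriv (dP ainv p) t / dP ainv p t = p / q - 1 := by
    rw [hderiv_eq, hsp1]
    unfold dP
    rw [← hs]
    rw [hqdef]
    field_simp
  rw [hkey]
  constructor
  · have h1 : p / a₁ ≤ p / q := by
      apply div_le_div_of_nonneg_left (le_of_lt hp0) hq0 hq.2
    have : (p - a₁) / a₁ = p / a₁ - 1 := by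
      have ha₁ : a₁ ≠ 0 := ne_of_gt (lt_of_lt_of_le ha₀ ha₀₁)
      field_simp
    rw [this]
    linarith
  · have h2 : p / q ≤ p / a₀ := by
      apply div_le_div_of_nonneg_left (le_of_lt hp0) ha₀ hq.1
    have : (p - a₀) / a₀ = p / a₀ - 1 := by
      field_simp
    rw [this]
    linarith
end

section
/- Let u be an entropy solution of the obstacle problem with data (f,ψ,g), f ∈ L¹(Ω). Then for every t > 0, ∫_{{h ≤ |u| ≤ h+t}} A(|∇u|) dx → 0 as h → ∞. -/
/-!
Test the entropy inequality with `v = T_h u`, admissible once `h` bounds `ψ` and `g`, and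
`s = t`. The gradient of `T_t(T_h u - u)` is `-∇u` on the open band `h < |u| < h + t` and `0`
elsewhere, except on the null set where `∇u ≠ 0` and `|u| ∈ {h, h + t}`. This gives
`∫_{h<|u|<h+t} |∇u| a(|∇u|) ≤ ∫_Ω f T_t(T_h u - u)`. Because `A(τ) ≤ τ a(τ)`, the left side
bounds the integral of `A(|∇u|)` over the band. The right side tends to `0` by dominated
convergence, since `|T_t(T_h u - u)| ≤ t` and `T_t(T_h u - u)` vanishes once `h ≥ |u|`.
The bound `τ a(τ) ≤ (1 + a₁) A(τ)` is needed only because of the convention that a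
non-integrable function has integral `0`: it makes `A(|∇u|)` integrable on the band exactly
when `|∇u| a(|∇u|)` is.
-/

open Real Set MeasureTheory Filter

/-- Truncation at level `s`: `T_s(r) = max(-s, min(s, r))`. -/
noncomputable def trunc (s r : ℝ) : ℝ := max (-s) (min s r)

/-- The `A`-gradient `∇_A u = (a(|∇u|)/|∇u|)∇u`. -/
noncomputable def gradA {N : ℕ} (a : ℝ → ℝ)
    (u : EuclideanSpace ℝ (Fin N) → ℝ) (x : EuclideanSpace ℝ (Fin N)) :
    EuclideanSpace ℝ (Fin N) :=
  (a ‖gradient u x‖ / ‖gradient u x‖) • gradient u x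

open Topology InnerProductSpace

section Trunc

variable {s r : ℝ}

lemma trunc_of_abs_le (h : |r| ≤ s) : trunc s r = r := by
  rw [abs_le] at h
  rw [trunc, min_eq_right h.2, max_eq_right h.1]

lemma trunc_of_le (hs : 0 ≤ s) (h : s ≤ r) : trunc s r = s := by
  rw [trunc, min_eq_left h, max_eq_right (by linarith)]

lemma trunc_of_le_neg (hs : 0 ≤ s) (h : r ≤ -s) : trunc s r = -s := by
  rw [trunc, min_eq_right (by linarith), max_eq_left h]

lemma abs_trunc_le (hs : 0 ≤ s) : |trunc s r| ≤ s :=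
  abs_le.2 ⟨le_max_left _ _, max_le (by linarith) (min_le_left _ _)⟩

lemma abs_trunc_sub_self (hs : 0 ≤ s) (h : s ≤ |r|) : |trunc s r - r| = |r| - s := by
  rcases le_abs'.1 h with hr | hr
  · rw [trunc_of_le_neg hs hr, abs_of_nonpos (by linarith : r ≤ 0), abs_of_nonneg (by linarith)]
    ring
  · rw [trunc_of_le hs hr, abs_of_nonneg (by linarith : 0 ≤ r), abs_of_nonpos (by linarith)]
    ring

lemma hasDerivAt_trunc_of_abs_lt (h : |r| < s) : HasDerivAt (trunc s) 1 r := by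
  refine (hasDerivAt_id' r).congr_of_eventuallyEq ?_
  filter_upwards [(isOpen_lt continuous_abs continuous_const).mem_nhds h] with y hy
  exact trunc_of_abs_le (le_of_lt hy)

lemma hasDerivAt_trunc_of_lt_abs (hs : 0 ≤ s) (h : s < |r|) : HasDerivAt (trunc s) 0 r := by
  rcases lt_abs.1 h with hr | hr
  · refine (hasDerivAt_const r s).congr_of_eventuallyEq ?_
    filter_upwards [lt_mem_nhds hr] with y hy
    exact trunc_of_le hs hy.le
  · refine (hasDerivAt_const r (-s)).congr_of_eventuallyEq ?_
    filter_upwards [gt_mem_nhds (lt_neg.1 hr)] with y hy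
    exact trunc_of_le_neg hs hy.le

lemma hasDerivAt_trunc_trunc_sub {h t : ℝ} (hh : 0 ≤ h) (ht : 0 < t)
    (hrh : |r| ≠ h) (hrt : |r| ≠ h + t) :
    HasDerivAt (fun y => trunc t (trunc h y - y))
      (if h < |r| ∧ |r| < h + t then -1 else 0) r := by
  rcases hrh.lt_or_gt with hlt | hgt
  · have hin : HasDerivAt (fun y => trunc h y - y) (1 - 1) r :=
      (hasDerivAt_trunc_of_abs_lt hlt).fun_sub (hasDerivAt_id' r)
    have hout : HasDerivAt (trunc t) 1 (trunc h r - r) := by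
      rw [trunc_of_abs_le hlt.le, sub_self]
      exact hasDerivAt_trunc_of_abs_lt (by simpa using ht)
    have := hout.comp (h := fun y => trunc h y - y) r hin
    rw [sub_self, mul_zero] at this
    rw [if_neg fun h' => hlt.not_gt h'.1]
    exact this
  · have hin : HasDerivAt (fun y => trunc h y - y) (0 - 1) r :=
      (hasDerivAt_trunc_of_lt_abs hh hgt).fun_sub (hasDerivAt_id' r)
    have habs := abs_trunc_sub_self (r := r) hh hgt.le
    rcases hrt.lt_or_gt with hlt' | hgt'
    · have := (hasDerivAt_trunc_of_abs_lt (s := t) (r := trunc h r - r) (by linarith)).comp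
        (h := fun y => trunc h y - y) r hin
      rw [zero_sub, mul_neg_one] at this
      rw [if_pos ⟨hgt, hlt'⟩]
      exact this
    · have := (hasDerivAt_trunc_of_lt_abs (s := t) (r := trunc h r - r) ht.le
        (by linarith)).comp (h := fun y => trunc h y - y) r hin
      rw [zero_mul] at this
      rw [if_neg fun h' => hgt'.not_gt h'.2]
      exact this

end Trunc

section Gradient

variable {F : Type*} [NormedAddCommGroup F] [InnerProductSpace ℝ F] [CompleteSpace F]

lemma differentiableAt_of_gradient_ne_zero {u : F → ℝ} {x : F} (h : gradient u x ≠ 0) :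
    DifferentiableAt ℝ u x :=
  not_not.1 fun hd => h (gradient_eq_zero_of_not_differentiableAt hd)

lemma gradient_comp_of_hasDerivAt {φ : ℝ → ℝ} {φ' : ℝ} {u : F → ℝ} {x : F}
    (hφ : HasDerivAt φ φ' (u x)) (hu : DifferentiableAt ℝ u x) :
    gradient (fun y => φ (u y)) x = φ' • gradient u x := by
  refine HasGradientAt.gradient ?_
  rw [hasGradientAt_iff_hasFDerivAt, map_smul, toDual_gradient]
  exact hφ.comp_hasFDerivAt x hu.hasFDerivAt

lemma measurable_gradient [FiniteDimensional ℝ F] [MeasurableSpace F] [BorelSpace F]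
    (u : F → ℝ) : Measurable (gradient u) :=
  (toDual ℝ F).symm.continuous.measurable.comp (measurable_fderiv ℝ u)

end Gradient

section GradA

variable {N : ℕ}

lemma inner_gradA_smul_gradient (a : ℝ → ℝ) (u : EuclideanSpace ℝ (Fin N) → ℝ)
    (x : EuclideanSpace ℝ (Fin N)) (c : ℝ) :
    inner ℝ (gradA a u x) (c • gradient u x) = c * (‖gradient u x‖ * a ‖gradient u x‖) := by
  rw [gradA, real_inner_smul_left, real_inner_smul_right, real_inner_self_eq_norm_sq]
  rcases eq_or_ne ‖gradient u x‖ 0 with h0 | h0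
  · simp [h0]
  · field_simp

lemma inner_gradA_gradient_trunc_trunc_sub (a : ℝ → ℝ) (u : EuclideanSpace ℝ (Fin N) → ℝ)
    {h t : ℝ} (hh : 0 ≤ h) (ht : 0 < t) {x : EuclideanSpace ℝ (Fin N)}
    (hx : gradient u x ≠ 0 → |u x| ≠ h ∧ |u x| ≠ h + t) :
    inner ℝ (gradA a u x) (gradient (fun y => trunc t (trunc h (u y) - u y)) x) =
      -{x | gradient u x ≠ 0 ∧ h < |u x| ∧ |u x| < h + t}.indicator
        (fun x => ‖gradient u x‖ * a ‖gradient u x‖) x := by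
  by_cases hg : gradient u x = 0
  · simp [gradA, hg]
  rw [gradient_comp_of_hasDerivAt (hasDerivAt_trunc_trunc_sub hh ht (hx hg).1 (hx hg).2)
    (differentiableAt_of_gradient_ne_zero hg), inner_gradA_smul_gradient]
  by_cases hb : h < |u x| ∧ |u x| < h + t
  · simp [hb, hg]
  · simp [hb]

end GradA

lemma countable_setOf_deriv_ne_zero_and_eq (g : ℝ → ℝ) (c : ℝ) :
    {τ | deriv g τ ≠ 0 ∧ g τ = c}.Countable := by
  refine (HereditarilyLindelofSpace.isLindelof _).countable_of_isDiscrete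
    (isDiscrete_iff_nhdsNE.2 fun τ hτ => ?_)
  have hd : HasDerivAt g (deriv g τ) τ :=
    (differentiableAt_of_deriv_ne_zero hτ.1).hasDerivAt
  rw [← empty_mem_iff_bot]
  filter_upwards [mem_inf_of_left (hd.eventually_ne (c := c) hτ.1),
    mem_inf_of_right (mem_principal_self _)] with σ hσ hσ' using hσ hσ'.2

lemma ContinuousOn.measurableSet_inter_preimage {α β : Type*} [TopologicalSpace α]
    [MeasurableSpace α] [OpensMeasurableSpace α] [TopologicalSpace β] {f : α → β} {s : Set α}
    (hf : ContinuousOn f s) (hs : MeasurableSet s) {t : Set β} (ht : IsOpen t) :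
    MeasurableSet (s ∩ f ⁻¹' t) := by
  obtain ⟨V, hV, hVeq⟩ := continuousOn_iff'.1 hf t ht
  rw [inter_comm, hVeq]
  exact hV.measurableSet.inter hs

section LevelSet

variable {E : Type*} [NormedAddCommGroup E] [NormedSpace ℝ E] [FiniteDimensional ℝ E]
  [MeasurableSpace E] [BorelSpace E] (μ : Measure E) [μ.IsAddHaarMeasure]

/-- Along each line in direction `v`, the points of this set are isolated zeros of
`τ ↦ u (y + τ • v) - c`, hence countably many. -/
lemma addHaar_setOf_fderiv_apply_ne_zero_and_eq (u : E → ℝ) (v : E) (c : ℝ) :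
    μ {x | fderiv ℝ u x v ≠ 0 ∧ u x = c} = 0 := by
  set S := {x | fderiv ℝ u x v ≠ 0 ∧ u x = c}
  set D := {x | fderiv ℝ u x v ≠ 0}
  have hdiff : ∀ x ∈ D, DifferentiableAt ℝ u x := fun x hx =>
    not_not.1 fun hd => hx (by simp [fderiv_zero_of_not_differentiableAt hd])
  have hD : MeasurableSet D :=
    measurable_fderiv_apply_const ℝ u v (measurableSet_singleton 0).compl
  have hS : S = D \ (D ∩ u ⁻¹' {c}ᶜ) := by
    ext x
    simp [S, D, and_comm]
  have hSm : MeasurableSet S := by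
    rw [hS]
    have hu : ContinuousOn u D := fun x hx => (hdiff x hx).continuousAt.continuousWithinAt
    exact hD.diff (hu.measurableSet_inter_preimage hD isOpen_compl_singleton)
  let L : ℝ →L[ℝ] E := ContinuousLinearMap.smulRight (1 : ℝ →L[ℝ] ℝ) v
  rw [measure_eq_zero_iff_ae_notMem]
  refine ae_mem_of_ae_add_linearMap_mem L.toLinearMap volume μ hSm.compl fun y => ae_iff.2 ?_
  refine measure_mono_null (fun τ hτ => ?_)
    ((countable_setOf_deriv_ne_zero_and_eq (fun τ => u (y + τ • v)) c).measure_zero volume)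
  have hτS : y + τ • v ∈ S := by simpa [L] using not_not.1 hτ
  have hline : HasDerivAt (fun τ : ℝ => y + τ • v) v τ := by
    simpa using ((hasDerivAt_id τ).smul_const v).const_add y
  have hderiv : deriv (fun σ => u (y + σ • v)) τ = fderiv ℝ u (y + τ • v) v :=
    ((hdiff _ hτS.1).hasFDerivAt.comp_hasDerivAt τ hline).deriv
  exact ⟨hderiv ▸ hτS.1, hτS.2⟩

lemma addHaar_setOf_fderiv_ne_zero_and_mem (u : E → ℝ) {C : Set ℝ} (hC : C.Countable) :
    μ {x | fderiv ℝ u x ≠ 0 ∧ u x ∈ C} = 0 := by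
  let b := Module.finBasis ℝ E
  refine measure_mono_null (fun x hx => ?_) ((measure_biUnion_null_iff hC).2 fun c _ =>
    measure_iUnion_null fun i => addHaar_setOf_fderiv_apply_ne_zero_and_eq μ u (b i) c)
  obtain ⟨i, hi⟩ : ∃ i, fderiv ℝ u x (b i) ≠ 0 := by
    by_contra! h
    exact hx.1 (ContinuousLinearMap.coe_injective (b.ext fun i => by simpa using h i))
  simp only [mem_iUnion]
  exact ⟨u x, hx.2, i, hi, rfl⟩

end LevelSet

lemma ae_gradient_ne_zero_imp_abs_ne {F : Type*} [NormedAddCommGroup F] [InnerProductSpace ℝ F]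
    [FiniteDimensional ℝ F] [MeasurableSpace F] [BorelSpace F] (μ : Measure F)
    [μ.IsAddHaarMeasure] (u : F → ℝ) (c : ℝ) :
    ∀ᵐ x ∂μ, gradient u x ≠ 0 → |u x| ≠ c := by
  refine measure_mono_null (fun x hx => ?_)
    (addHaar_setOf_fderiv_ne_zero_and_mem μ u (Set.toFinite {c, -c}).countable)
  obtain ⟨hg, e⟩ := Classical.not_imp.1 hx
  refine ⟨fun h => hg (by rw [gradient, h, map_zero]), ?_⟩
  rw [← not_not.1 e]
  rcases abs_choice (u x) with h | h <;> rw [h] <;> simp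

/-- Dominated convergence without a measurability hypothesis: a non-measurable `F i` has
integral `0` anyway, so it may be replaced by `0`. -/
lemma tendsto_integral_of_dominated_of_eventually_eq_zero {ι α : Type*} [MeasurableSpace α]
    {μ : Measure α} {l : Filter ι} [l.IsCountablyGenerated] {F : ι → α → ℝ} {bound : α → ℝ}
    (hbound : Integrable bound μ) (hle : ∀ i, ∀ᵐ x ∂μ, ‖F i x‖ ≤ bound x)
    (hlim : ∀ᵐ x ∂μ, ∀ᶠ i in l, F i x = 0) :
    Tendsto (fun i => ∫ x, F i x ∂μ) l (𝓝 0) := by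
  classical
  let F' : ι → α → ℝ := fun i => if AEStronglyMeasurable (F i) μ then F i else 0
  have hF' : ∀ i, ∫ x, F i x ∂μ = ∫ x, F' i x ∂μ := fun i => by
    by_cases hi : AEStronglyMeasurable (F i) μ
    · simp [F', hi]
    · simp [F', hi, integral_undef fun hint => hi hint.aestronglyMeasurable]
  simp_rw [hF']
  have key := tendsto_integral_filter_of_dominated_convergence (μ := μ) (l := l) (F := F')
    (f := 0) bound (Eventually.of_forall fun i => ?_) (Eventually.of_forall fun i => ?_) hbound ?_
  · simpa using key
  · by_cases hi : AEStronglyMeasurable (F i) μ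
    · simp [F', hi]
    · simpa [F', hi] using stronglyMeasurable_zero.aestronglyMeasurable
  · filter_upwards [hle i] with x hx
    by_cases hi : AEStronglyMeasurable (F i) μ
    · simpa [F', hi] using hx
    · simpa [F', hi] using (norm_nonneg _).trans hx
  · filter_upwards [hlim] with x hx
    refine tendsto_const_nhds.congr' ?_
    filter_upwards [hx] with i hi
    by_cases hm : AEStronglyMeasurable (F i) μ <;> simp [F', hm, hi]

lemma tendsto_integral_mul_trunc_trunc_sub {α : Type*} [MeasurableSpace α] {μ : Measure α}
    {f : α → ℝ} (hf : Integrable f μ) (u : α → ℝ) {t : ℝ} (ht : 0 ≤ t) :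
    Tendsto (fun h => ∫ x, f x * trunc t (trunc h (u x) - u x) ∂μ) atTop (𝓝 0) := by
  refine tendsto_integral_of_dominated_of_eventually_eq_zero (hf.norm.const_mul t)
    (fun h => Eventually.of_forall fun x => ?_) (Eventually.of_forall fun x => ?_)
  · rw [norm_mul, mul_comm, Real.norm_eq_abs, Real.norm_eq_abs]
    exact mul_le_mul_of_nonneg_right (abs_trunc_le ht) (abs_nonneg _)
  · filter_upwards [eventually_ge_atTop |u x|] with h hh
    rw [trunc_of_abs_le hh, sub_self, trunc_of_abs_le (by simpa using ht), mul_zero]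

lemma monotoneOn_Ioi_of_hasDerivAt_nonneg {f f' : ℝ → ℝ} {b : ℝ}
    (hf : ∀ x > b, HasDerivAt f (f' x) x) (hf' : ∀ x > b, 0 ≤ f' x) : MonotoneOn f (Ioi b) :=
  monotoneOn_of_hasDerivWithinAt_nonneg (convex_Ioi b) (HasDerivAt.continuousOn hf)
    (by rw [interior_Ioi]; exact fun x hx => (hf x hx).hasDerivWithinAt)
    (by rw [interior_Ioi]; exact hf')

section Orlicz

variable {a a' : ℝ → ℝ}

lemma monotoneOn_Ici_of_hasDerivAt_nonneg (hderiv : ∀ t > 0, HasDerivAt a (a' t) t)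
    (ha' : ∀ t > 0, 0 ≤ a' t) (haz : a 0 = 0) (hnn : ∀ t > 0, 0 ≤ a t) :
    MonotoneOn a (Ici 0) := by
  intro s hs τ hτ hsτ
  rcases (mem_Ici.1 hs).eq_or_lt with rfl | hs'
  · rcases (mem_Ici.1 hτ).eq_or_lt with rfl | hτ'
    · rfl
    · rw [haz]
      exact hnn τ hτ'
  · exact monotoneOn_Ioi_of_hasDerivAt_nonneg hderiv ha' hs' (hs'.trans_le hsτ) hsτ

variable (hmono : MonotoneOn a (Ici 0))
include hmono

lemma intervalIntegrable_of_monotoneOn_Ici {τ : ℝ} (hτ : 0 ≤ τ) :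
    IntervalIntegrable a volume 0 τ :=
  (hmono.mono (by rw [uIcc_of_le hτ]; exact Icc_subset_Ici_self)).intervalIntegrable

lemma intervalIntegral_nonneg_of_monotoneOn_Ici (haz : a 0 = 0) {τ : ℝ} (hτ : 0 ≤ τ) :
    0 ≤ ∫ s in (0 : ℝ)..τ, a s :=
  intervalIntegral.integral_nonneg hτ fun _ hs => haz ▸ hmono self_mem_Ici hs.1 hs.1

lemma intervalIntegral_le_mul_of_monotoneOn_Ici {τ : ℝ} (hτ : 0 ≤ τ) :
    ∫ s in (0 : ℝ)..τ, a s ≤ τ * a τ :=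
  calc ∫ s in (0 : ℝ)..τ, a s ≤ ∫ _ in (0 : ℝ)..τ, a τ :=
        intervalIntegral.integral_mono_on hτ (intervalIntegrable_of_monotoneOn_Ici hmono hτ)
          intervalIntegrable_const fun s hs => hmono hs.1 hτ hs.2
    _ = τ * a τ := by simp

lemma hasDerivAt_intervalIntegral_of_monotoneOn_Ici (hderiv : ∀ t > 0, HasDerivAt a (a' t) t)
    {s : ℝ} (hs : 0 < s) : HasDerivAt (fun τ => ∫ x in (0 : ℝ)..τ, a x) (a s) s :=
  intervalIntegral.integral_hasDerivAt_right (intervalIntegrable_of_monotoneOn_Ici hmono hs.le)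
    (ContinuousOn.stronglyMeasurableAtFilter isOpen_Ioi
      (HasDerivAt.continuousOn fun t ht => hderiv t ht) s hs) (hderiv s hs).continuousAt

/-- By the upper index bound, `(1 + a₁) A(s) - s a(s)` is nondecreasing on `(0, ∞)`, and it tends
to `0` at `0⁺`. -/
lemma mul_le_intervalIntegral_of_monotoneOn_Ici (hderiv : ∀ t > 0, HasDerivAt a (a' t) t)
    (haz : a 0 = 0) {a₁ : ℝ} (ha₁ : 0 ≤ a₁) (hupper : ∀ t > 0, t * a' t ≤ a₁ * a t)
    {τ : ℝ} (hτ : 0 ≤ τ) : τ * a τ ≤ (1 + a₁) * ∫ s in (0 : ℝ)..τ, a s := by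
  rcases hτ.eq_or_lt with rfl | hτ
  · simp
  set ρ : ℝ → ℝ := fun s => (1 + a₁) * (∫ x in (0 : ℝ)..s, a x) - s * a s
  have hρ : MonotoneOn ρ (Ioi 0) := monotoneOn_Ioi_of_hasDerivAt_nonneg
    (fun s hs => ((hasDerivAt_intervalIntegral_of_monotoneOn_Ici hmono hderiv hs).const_mul
      (1 + a₁)).fun_sub ((hasDerivAt_id' s).fun_mul (hderiv s hs)))
    (fun s hs => by nlinarith [hupper s hs])
  have hbound : ∀ σ ∈ Ioo 0 τ, -(σ * a τ) ≤ ρ τ := fun σ hσ => by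
    have h1 := hρ hσ.1 hτ hσ.2.le
    have h2 := intervalIntegral_nonneg_of_monotoneOn_Ici hmono haz hσ.1.le
    have h3 := hmono hσ.1.le hτ.le hσ.2.le
    simp only [ρ] at h1 ⊢
    nlinarith [hσ.1]
  have hlim : Tendsto (fun σ : ℝ => -(σ * a τ)) (𝓝[>] 0) (𝓝 0) := by
    refine ((by fun_prop : Continuous fun σ : ℝ => -(σ * a τ)).tendsto' 0 0 ?_).mono_left
      nhdsWithin_le_nhds
    simp
  have := le_of_tendsto hlim (eventually_of_mem (Ioo_mem_nhdsGT hτ) hbound)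
  simp only [ρ] at this
  linarith

end Orlicz

lemma measurable_comp_of_monotoneOn_Ici {α : Type*} [MeasurableSpace α] {a : ℝ → ℝ}
    (hmono : MonotoneOn a (Ici 0)) {g : α → ℝ} (hg : Measurable g) (hg0 : ∀ x, 0 ≤ g x) :
    Measurable fun x => a (g x) := by
  have hmax : Monotone fun τ => a (max τ 0) := fun s τ hsτ =>
    hmono (le_max_right s 0) (le_max_right τ 0) (max_le_max hsτ le_rfl)
  simpa [Function.comp_def, max_eq_left (hg0 _)] using hmax.measurable.comp hg

lemma setIntegral_band_eq {F : Type*} [NormedAddCommGroup F] [InnerProductSpace ℝ F]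
    [FiniteDimensional ℝ F] [MeasurableSpace F] [BorelSpace F] {Ω : Set F} {A : ℝ → ℝ} (hA0 : A 0 = 0) (u : F → ℝ) (h t : ℝ) :
    ∫ x in {x ∈ Ω | h ≤ |u x| ∧ |u x| ≤ h + t}, A ‖gradient u x‖ =
      ∫ x in {x | gradient u x ≠ 0 ∧ h < |u x| ∧ |u x| < h + t} ∩ Ω, A ‖gradient u x‖ := by
  set D := {x | gradient u x ≠ 0}
  have hD : MeasurableSet D := measurable_gradient u (measurableSet_singleton 0).compl
  have hEh : (D ∩ {x ∈ Ω | h ≤ |u x| ∧ |u x| ≤ h + t} : Set F) =ᵐ[volume]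
      ({x | gradient u x ≠ 0 ∧ h < |u x| ∧ |u x| < h + t} ∩ Ω : Set F) := by
    refine eventuallyEq_set.2 ?_
    filter_upwards [ae_gradient_ne_zero_imp_abs_ne volume u h,
      ae_gradient_ne_zero_imp_abs_ne volume u (h + t)] with x hxh hxt
    by_cases hg : gradient u x = 0
    · simp [D, hg]
    constructor
    · rintro ⟨hg, hΩ, h1, h2⟩
      exact ⟨⟨hg, lt_of_le_of_ne h1 (hxh hg).symm, lt_of_le_of_ne h2 (hxt hg)⟩, hΩ⟩
    · rintro ⟨⟨hg, h1, h2⟩, hΩ⟩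
      exact ⟨hg, hΩ, h1.le, h2.le⟩
  rw [← Measure.restrict_congr_set hEh, ← Measure.restrict_restrict hD, ← integral_indicator hD]
  congr 1 with x
  by_cases hg : gradient u x = 0 <;> simp [D, hg, hA0]

lemma setIntegral_band_le_of_entropy {N : ℕ} {Ω : Set (EuclideanSpace ℝ (Fin N))}
    {a A : ℝ → ℝ} {u f : EuclideanSpace ℝ (Fin N) → ℝ} {C : ℝ} (hmono : MonotoneOn a (Ici 0))
    (hA : ∀ τ, 0 ≤ τ → 0 ≤ A τ ∧ A τ ≤ τ * a τ ∧ τ * a τ ≤ C * A τ)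
    {h t : ℝ} (hh : 0 ≤ h) (ht : 0 < t)
    (hent : 0 ≤ (∫ x in Ω, inner ℝ (gradA a u x)
        (gradient (fun y => trunc t (trunc h (u y) - u y)) x))
      + ∫ x in Ω, f x * trunc t (trunc h (u x) - u x)) :
    ∫ x in {x ∈ Ω | h ≤ |u x| ∧ |u x| ≤ h + t}, A ‖gradient u x‖ ≤
      max 0 (∫ x in Ω, f x * trunc t (trunc h (u x) - u x)) := by
  set X := {x | gradient u x ≠ 0 ∧ h < |u x| ∧ |u x| < h + t}
  set G := fun x => ‖gradient u x‖ * a ‖gradient u x‖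
  have hX : MeasurableSet X := by
    have hu : ContinuousOn u {x | gradient u x ≠ 0} := fun x hx =>
      (differentiableAt_of_gradient_ne_zero hx).continuousAt.continuousWithinAt
    exact hu.measurableSet_inter_preimage (t := {r | h < |r| ∧ |r| < h + t})
      (measurable_gradient u (measurableSet_singleton 0).compl)
      ((isOpen_lt continuous_const continuous_abs).inter
        (isOpen_lt continuous_abs continuous_const))
  have hG : Measurable G := (measurable_gradient u).norm.mul
    (measurable_comp_of_monotoneOn_Ici hmono (measurable_gradient u).norm fun _ => norm_nonneg _)
  have hflux : ∫ x in Ω, inner ℝ (gradA a u x)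
      (gradient (fun y => trunc t (trunc h (u y) - u y)) x) = -∫ x in X ∩ Ω, G x := by
    have hae : ∀ᵐ x, gradient u x ≠ 0 → |u x| ≠ h ∧ |u x| ≠ h + t := by
      filter_upwards [ae_gradient_ne_zero_imp_abs_ne volume u h,
        ae_gradient_ne_zero_imp_abs_ne volume u (h + t)] with x hxh hxt hg
      exact ⟨hxh hg, hxt hg⟩
    rw [integral_congr_ae (ae_restrict_of_ae (hae.mono fun x hx =>
      inner_gradA_gradient_trunc_trunc_sub a u hh ht hx)), integral_neg, integral_indicator hX,
      Measure.restrict_restrict hX]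
  have hA0 : A 0 = 0 := le_antisymm (by simpa using (hA 0 le_rfl).2.1) (hA 0 le_rfl).1
  rw [setIntegral_band_eq hA0]
  by_cases hint : IntegrableOn (fun x => A ‖gradient u x‖) (X ∩ Ω)
  · have hGint : IntegrableOn G (X ∩ Ω) :=
      (hint.const_mul C).mono' hG.aestronglyMeasurable (Eventually.of_forall fun x => by
        obtain ⟨h0, h1, h2⟩ := hA _ (norm_nonneg (gradient u x))
        rw [Real.norm_of_nonneg (h0.trans h1)]
        exact h2)
    calc ∫ x in X ∩ Ω, A ‖gradient u x‖ ≤ ∫ x in X ∩ Ω, G x :=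
          integral_mono_of_nonneg (Eventually.of_forall fun x => (hA _ (norm_nonneg _)).1) hGint
            (Eventually.of_forall fun x => (hA _ (norm_nonneg _)).2.1)
      _ ≤ ∫ x in Ω, f x * trunc t (trunc h (u x) - u x) := by linarith
      _ ≤ _ := le_max_right _ _
  · rw [integral_undef hint]
    exact le_max_left _ _

theorem stmt_9_general {N : ℕ}
    (Ω : Set (EuclideanSpace ℝ (Fin N)))
    (a a' : ℝ → ℝ) (a₀ a₁ : ℝ)
    (ha₀ : 0 < a₀) (ha₀₁ : a₀ ≤ a₁)
    (hderiv : ∀ t > (0:ℝ), HasDerivAt a (a' t) t)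
    (haz : a 0 = 0) (hpos : ∀ t > (0:ℝ), 0 < a t)
    (hstruct : ∀ t > (0:ℝ), a₀ ≤ t * a' t / a t ∧ t * a' t / a t ≤ a₁)
    (A : ℝ → ℝ) (hA : ∀ t, A t = ∫ s in (0:ℝ)..t, a s)
    (ψ g f u : EuclideanSpace ℝ (Fin N) → ℝ)
    (hψbdd : ∃ M, ∀ x ∈ Ω, |ψ x| ≤ M) (hgbdd : ∃ M, ∀ x ∈ Ω, |g x| ≤ M)
    -- the admissible convex set `K_{ψ,g}`, containing the truncations of `u`
    (K : Set (EuclideanSpace ℝ (Fin N) → ℝ))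
    (hTuK : ∀ h : ℝ, (∀ x ∈ Ω, |ψ x| ≤ h) → (∀ x ∈ Ω, |g x| ≤ h) →
      (fun y => trunc h (u y)) ∈ K)
    (hf : IntegrableOn f Ω)
    -- `u` is an entropy solution
    (hentropy : ∀ v ∈ K, ∀ s > (0:ℝ),
      0 ≤ (∫ x in Ω, @inner ℝ _ _ (gradA a u x)
              (gradient (fun y => trunc s (v y - u y)) x))
          + ∫ x in Ω, f x * trunc s (v x - u x)) :
    ∀ t > (0:ℝ),
      Tendsto (fun h : ℝ =>
          ∫ x in {x ∈ Ω | h ≤ |u x| ∧ |u x| ≤ h + t}, A ‖gradient u x‖)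
        atTop (nhds 0) := by
  intro t ht
  obtain ⟨Mψ, hMψ⟩ := hψbdd
  obtain ⟨Mg, hMg⟩ := hgbdd
  have ha' : ∀ s > 0, 0 ≤ a' s := fun s hs =>
    (pos_of_mul_pos_right ((mul_pos ha₀ (hpos s hs)).trans_le
      ((le_div_iff₀ (hpos s hs)).1 (hstruct s hs).1)) hs.le).le
  have hmono : MonotoneOn a (Ici 0) :=
    monotoneOn_Ici_of_hasDerivAt_nonneg hderiv ha' haz fun s hs => (hpos s hs).le
  have hupper : ∀ s > 0, s * a' s ≤ a₁ * a s := fun s hs =>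
    (div_le_iff₀ (hpos s hs)).1 (hstruct s hs).2
  have hAbounds : ∀ τ, 0 ≤ τ → 0 ≤ A τ ∧ A τ ≤ τ * a τ ∧ τ * a τ ≤ (1 + a₁) * A τ :=
    fun τ hτ => by
      simp only [hA]
      exact ⟨intervalIntegral_nonneg_of_monotoneOn_Ici hmono haz hτ,
        intervalIntegral_le_mul_of_monotoneOn_Ici hmono hτ,
        mul_le_intervalIntegral_of_monotoneOn_Ici hmono hderiv haz (ha₀.le.trans ha₀₁) hupper hτ⟩
  have hband : ∀ᶠ h in atTop, ∫ x in {x ∈ Ω | h ≤ |u x| ∧ |u x| ≤ h + t}, A ‖gradient u x‖ ≤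
      max 0 (∫ x in Ω, f x * trunc t (trunc h (u x) - u x)) := by
    filter_upwards [eventually_ge_atTop (max (max Mψ Mg) 0)] with h hh
    simp only [max_le_iff] at hh
    have hTu := hTuK h (fun x hx => (hMψ x hx).trans hh.1.1) (fun x hx => (hMg x hx).trans hh.1.2)
    exact setIntegral_band_le_of_entropy hmono hAbounds hh.2 ht (hentropy _ hTu t ht)
  refine tendsto_of_tendsto_of_tendsto_of_le_of_le' tendsto_const_nhds ?_
    (Eventually.of_forall fun h => integral_nonneg fun x => (hAbounds _ (norm_nonneg _)).1) hband
  simpa using (tendsto_const_nhds (x := (0 : ℝ))).max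
    (tendsto_integral_mul_trunc_trunc_sub hf u ht.le)

/-- Lemma 3.3: if `u` is an entropy solution of the obstacle problem with data `(f,ψ,g)`,
`f ∈ L¹(Ω)`, then for every `t > 0`,
`∫_{h ≤ |u| ≤ h+t} A(|∇u|) dx → 0` as `h → ∞`. -/
theorem stmt_9 {N : ℕ} (hN : 2 ≤ N)
    (Ω : Set (EuclideanSpace ℝ (Fin N))) (hΩo : IsOpen Ω)
    (hΩb : Bornology.IsBounded Ω)
    (a a' : ℝ → ℝ) (a₀ a₁ : ℝ)
    (ha₀ : 0 < a₀) (ha₀₁ : a₀ ≤ a₁)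
    (hderiv : ∀ t > (0:ℝ), HasDerivAt a (a' t) t)
    (haz : a 0 = 0) (hpos : ∀ t > (0:ℝ), 0 < a t)
    (hstruct : ∀ t > (0:ℝ), a₀ ≤ t * a' t / a t ∧ t * a' t / a t ≤ a₁)
    (A : ℝ → ℝ) (hA : ∀ t, A t = ∫ s in (0:ℝ)..t, a s)
    (ψ g f u : EuclideanSpace ℝ (Fin N) → ℝ)
    (hψbdd : ∃ M, ∀ x ∈ Ω, |ψ x| ≤ M) (hgbdd : ∃ M, ∀ x ∈ Ω, |g x| ≤ M)
    -- the admissible convex set `K_{ψ,g}`, containing the truncations of `u`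
    (K : Set (EuclideanSpace ℝ (Fin N) → ℝ))
    (hK : ∀ v ∈ K, ∀ᵐ x ∂(volume.restrict Ω), ψ x ≤ v x)
    (hTuK : ∀ h : ℝ, (∀ x ∈ Ω, |ψ x| ≤ h) → (∀ x ∈ Ω, |g x| ≤ h) →
      (fun y => trunc h (u y)) ∈ K)
    (hf : IntegrableOn f Ω)
    -- `u` is an entropy solution
    (huψ : ∀ᵐ x ∂(volume.restrict Ω), ψ x ≤ u x)
    (hentropy : ∀ v ∈ K, ∀ s > (0:ℝ),
      0 ≤ (∫ x in Ω, @inner ℝ _ _ (gradA a u x)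
              (gradient (fun y => trunc s (v y - u y)) x))
          + ∫ x in Ω, f x * trunc s (v x - u x)) :
    ∀ t > (0:ℝ),
      Tendsto (fun h : ℝ =>
          ∫ x in {x ∈ Ω | h ≤ |u x| ∧ |u x| ≤ h + t}, A ‖gradient u x‖)
        atTop (nhds 0) :=
  stmt_9_general Ω a a' a₀ a₁ ha₀ ha₀₁ hderiv haz hpos hstruct A hA ψ g f u hψbdd hgbdd K hTuK hf
    hentropy
end
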